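/- Let (T_s)_{s∈S} be a bounded representation of a commutative monoid (S,+) on a Banach space E whose semigroup at infinity is non-empty and compact in the operator norm, and let R ⊆ S be a submonoid (containing 0) that is cofinal in S. Then the semigroup at infinity associated with the restricted representation (T_r)_{r∈R} (where R carries the pre-order induced by its own addition) is also non-empty and compact, and the projection at infinity of (T_r)_{r∈R} coincides with the projection at infinity of (T_s)_{s∈S}. -/
import Mathlib


open Filter Topology

/-- The pre-order on a commutative monoid `S`: `s ≤ t` iff `t = s + r` for some `r ∈ S`. -/
def sgLE {S : Type*} [AddCommMonoid S] (s t : S) : Prop := ∃ r : S, t = s + r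

/-- The semigroup at infinity with respect to the operator norm:
`𝒯_∞ = ⋂_{r ∈ S} closure {T_s : s ≥ r}`. -/
def sgAtInfty {E : Type*} [NormedAddCommGroup E] [NormedSpace ℝ E]
    {S : Type*} [AddCommMonoid S] (T : S → E →L[ℝ] E) : Set (E →L[ℝ] E) :=
  ⋂ r : S, closure (T '' {s | sgLE r s})

/-- `P` is the neutral element of the semigroup at infinity (the projection at infinity). -/
def IsNeutralAtInfty {E : Type*} [NormedAddCommGroup E] [NormedSpace ℝ E]
    {S : Type*} [AddCommMonoid S] (T : S → E →L[ℝ] E) (P : E →L[ℝ] E) : Prop :=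
  P ∈ sgAtInfty T ∧ ∀ A ∈ sgAtInfty T, P * A = A ∧ A * P = A

set_option linter.unusedSectionVars false
set_option linter.unusedVariables false

section Aux

variable {E : Type*} [NormedAddCommGroup E] [NormedSpace ℝ E]
  {S : Type*} [AddCommMonoid S] {T : S → E →L[ℝ] E}

lemma sgLE_refl (s : S) : sgLE s s := ⟨0, (add_zero s).symm⟩

lemma sgLE_trans {a b c : S} (h1 : sgLE a b) (h2 : sgLE b c) : sgLE a c := by
  obtain ⟨u, rfl⟩ := h1; obtain ⟨v, rfl⟩ := h2; exact ⟨u + v, add_assoc a u v⟩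

lemma mem_sgAtInfty {A : E →L[ℝ] E} :
    A ∈ sgAtInfty T ↔ ∀ r : S, A ∈ closure (T '' {s | sgLE r s}) := Set.mem_iInter

lemma isClosed_sgAtInfty : IsClosed (sgAtInfty T) :=
  isClosed_iInter fun _ => isClosed_closure

lemma sgAtInfty_subset_closure_range : sgAtInfty T ⊆ closure (Set.range T) := fun A hA =>
  closure_mono (by rintro x ⟨s, _, rfl⟩; exact ⟨s, rfl⟩) ((mem_sgAtInfty.mp hA) 0)

lemma commute_of_mem_closure_range (hTmul : ∀ s t : S, T (s + t) = T s * T t)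
    {A B : E →L[ℝ] E} (hA : A ∈ closure (Set.range T)) (hB : B ∈ closure (Set.range T)) :
    A * B = B * A := by
  have hC : IsClosed {p : (E →L[ℝ] E) × (E →L[ℝ] E) | p.1 * p.2 = p.2 * p.1} :=
    isClosed_eq (continuous_fst.mul continuous_snd) (continuous_snd.mul continuous_fst)
  have hsub : closure (Set.range T) ×ˢ closure (Set.range T) ⊆
      {p : (E →L[ℝ] E) × (E →L[ℝ] E) | p.1 * p.2 = p.2 * p.1} := by
    rw [← closure_prod_eq]
    refine closure_minimal ?_ hC
    rintro ⟨x, y⟩ ⟨⟨s, rfl⟩, ⟨t, rfl⟩⟩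
    show T s * T t = T t * T s
    rw [← hTmul, ← hTmul, add_comm]
  exact hsub (Set.mk_mem_prod hA hB)

/-- Left multiplication by `T s` preserves the closed tails. -/
lemma mul_mem_closure_tail (hTmul : ∀ s t : S, T (s + t) = T s * T t) (s : S) {q : S}
    {A : E →L[ℝ] E} (hA : A ∈ closure (T '' {x | sgLE q x})) :
    T s * A ∈ closure (T '' {x | sgLE q x}) := by
  have hcont : Continuous fun X : E →L[ℝ] E => T s * X := continuous_const.mul continuous_id
  have h2 := (image_closure_subset_closure_image hcont) (Set.mem_image_of_mem _ hA)
  refine closure_mono ?_ h2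
  rintro x ⟨y, ⟨t, ht, rfl⟩, rfl⟩
  refine ⟨s + t, ?_, hTmul s t⟩
  obtain ⟨u, rfl⟩ := ht
  exact ⟨u + s, by rw [add_comm s, add_assoc]⟩

lemma smul_mem_sgAtInfty (hTmul : ∀ s t : S, T (s + t) = T s * T t) (s : S)
    {A : E →L[ℝ] E} (hA : A ∈ sgAtInfty T) : T s * A ∈ sgAtInfty T := by
  rw [mem_sgAtInfty] at hA ⊢
  exact fun q => mul_mem_closure_tail hTmul s (hA q)

lemma mul_mem_sgAtInfty (hTmul : ∀ s t : S, T (s + t) = T s * T t)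
    {A B : E →L[ℝ] E} (hA : A ∈ sgAtInfty T) (hB : B ∈ sgAtInfty T) :
    A * B ∈ sgAtInfty T := by
  rw [mem_sgAtInfty] at hA ⊢
  intro q
  have hcont : Continuous fun X : E →L[ℝ] E => X * B := continuous_id.mul continuous_const
  have h2 := (image_closure_subset_closure_image hcont) (Set.mem_image_of_mem _ (hA q))
  have h3 : (fun X : E →L[ℝ] E => X * B) '' (T '' {s | sgLE q s}) ⊆
      closure (T '' {s | sgLE q s}) := by
    rintro x ⟨y, ⟨t, ht, rfl⟩, rfl⟩
    have hBA : T t * B ∈ closure (T '' {s | sgLE q s}) :=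
      mul_mem_closure_tail hTmul t (mem_sgAtInfty.mp hB q)
    exact hBA
  have h4 := closure_mono h3 h2
  rwa [closure_closure] at h4

lemma norm_le_of_mem {M : ℝ} (hM : ∀ s : S, ‖T s‖ ≤ M) {A : E →L[ℝ] E}
    (hA : A ∈ closure (Set.range T)) : ‖A‖ ≤ M := by
  have h : closure (Set.range T) ⊆ {X : E →L[ℝ] E | ‖X‖ ≤ M} :=
    closure_minimal (by rintro x ⟨s, rfl⟩; exact hM s)
      (isClosed_le continuous_norm continuous_const)
  exact h hA

/-- Existence of an idempotent in the (nonempty compact) semigroup at infinity. -/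
lemma exists_idempotent (hTmul : ∀ s t : S, T (s + t) = T s * T t)
    (hne : (sgAtInfty T).Nonempty) (hcp : IsCompact (sgAtInfty T)) :
    ∃ P ∈ sgAtInfty T, P * P = P := by
  set 𝒮 : Set (Set (E →L[ℝ] E)) :=
    {C | C.Nonempty ∧ IsClosed C ∧ C ⊆ sgAtInfty T ∧ ∀ x ∈ C, ∀ y ∈ C, x * y ∈ C} with h𝒮
  have hKS : sgAtInfty T ∈ 𝒮 :=
    ⟨hne, isClosed_sgAtInfty, subset_rfl, fun x hx y hy => mul_mem_sgAtInfty hTmul hx hy⟩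
  have hchainlb : ∀ c ⊆ 𝒮, IsChain (· ⊆ ·) c → c.Nonempty → ∃ lb ∈ 𝒮, ∀ s ∈ c, lb ⊆ s := by
    intro c hc hchain hcne
    refine ⟨⋂₀ c, ?_, fun s hs => Set.sInter_subset_of_mem hs⟩
    have hι : Nonempty c := hcne.to_subtype
    have hdir : Directed (· ⊇ ·) (fun C : c => (C : Set (E →L[ℝ] E))) := by
      rintro ⟨C1, h1⟩ ⟨C2, h2⟩
      rcases hchain.total h1 h2 with h | h
      · exact ⟨⟨C1, h1⟩, subset_rfl, h⟩
      · exact ⟨⟨C2, h2⟩, h, subset_rfl⟩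
    have hsint : ⋂₀ c = ⋂ C : c, (C : Set (E →L[ℝ] E)) := Set.sInter_eq_iInter
    refine ⟨?_, ?_, ?_, ?_⟩
    · rw [hsint]
      exact IsCompact.nonempty_iInter_of_directed_nonempty_isCompact_isClosed _ hdir
        (fun C => (hc C.2).1) (fun C => hcp.of_isClosed_subset (hc C.2).2.1 (hc C.2).2.2.1)
        (fun C => (hc C.2).2.1)
    · exact isClosed_sInter fun C hC => (hc hC).2.1
    · obtain ⟨C0, hC0⟩ := hcne
      exact (Set.sInter_subset_of_mem hC0).trans (hc hC0).2.2.1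
    · intro a ha b hb
      exact fun C hC => (hc hC).2.2.2 a (ha C hC) b (hb C hC)
  obtain ⟨m, -, hmin⟩ := zorn_superset_nonempty 𝒮 hchainlb _ hKS
  · obtain ⟨hmne, hmcl, hmK, hmmul⟩ := hmin.prop
    obtain ⟨x, hx⟩ := hmne
    have hmcp : IsCompact m := hcp.of_isClosed_subset hmcl hmK
    -- m * x = m
    have hmx : (fun y : E →L[ℝ] E => y * x) '' m = m := by
      have hsub : (fun y : E →L[ℝ] E => y * x) '' m ⊆ m := by
        rintro - ⟨y, hy, rfl⟩; exact hmmul y hy x hx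
      have hmem : (fun y : E →L[ℝ] E => y * x) '' m ∈ 𝒮 := by
        refine ⟨⟨x * x, ⟨x, hx, rfl⟩⟩, (hmcp.image (continuous_id.mul continuous_const)).isClosed,
          hsub.trans hmK, ?_⟩
        rintro - ⟨a, ha, rfl⟩ - ⟨b, hb, rfl⟩
        refine ⟨a * x * b, hmmul _ (hmmul a ha x hx) b hb, rfl⟩
      exact (hmin.eq_of_superset hmem hsub).symm
    -- x ∈ m = m*x, so x = y*x for some y ∈ m
    obtain ⟨y, hy, hyx⟩ : ∃ y ∈ m, y * x = x := by
      have := hmx ▸ hx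
      obtain ⟨y, hy, hyx⟩ := this
      exact ⟨y, hy, hyx⟩
    -- D = {y ∈ m | y * x = x} is in 𝒮 and ⊆ m, hence = m, so x * x = x
    have hD : {z | z ∈ m ∧ z * x = x} ∈ 𝒮 := by
      refine ⟨⟨y, hy, hyx⟩, ?_, (fun z hz => hmK hz.1), ?_⟩
      · exact hmcl.inter (isClosed_eq (continuous_id.mul continuous_const) continuous_const)
      · rintro a ⟨ham, hax⟩ b ⟨hbm, hbx⟩
        exact ⟨hmmul a ham b hbm, by rw [mul_assoc, hbx, hax]⟩
    have hDm : {z | z ∈ m ∧ z * x = x} = m := (hmin.eq_of_superset hD (fun z hz => hz.1)).symm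
    have hxm : x ∈ {z | z ∈ m ∧ z * x = x} := by rw [hDm]; exact hx
    exact ⟨x, hmK hx, hxm.2⟩

omit [NormedSpace ℝ E] in
lemma norm_le_of_mem' : True := trivial

/-- Tail smallness: eventually `T s` is close to `T s * P` for an idempotent `P` at infinity. -/
lemma tail_small (hTmul : ∀ s t : S, T (s + t) = T s * T t) {M : ℝ} (hM : ∀ s : S, ‖T s‖ ≤ M)
    {P : E →L[ℝ] E} (hP : P ∈ sgAtInfty T) (hPP : P * P = P) {ε : ℝ} (hε : 0 < ε) :
    ∃ s0 : S, ∀ s : S, sgLE s0 s → ‖T s - T s * P‖ ≤ ε := by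
  have hM0 : 0 ≤ M := le_trans (norm_nonneg _) (hM 0)
  set δ := ε / (M * (1 + M) + 1) with hδdef
  have hden : (0:ℝ) < M * (1 + M) + 1 := by positivity
  have hδpos : 0 < δ := div_pos hε hden
  have h0 := mem_sgAtInfty.mp hP 0
  rw [Metric.mem_closure_iff] at h0
  obtain ⟨b, ⟨s0, -, rfl⟩, hb⟩ := h0 δ hδpos
  have hPnorm : ‖P‖ ≤ M := norm_le_of_mem hM (sgAtInfty_subset_closure_range hP)
  have hPs0 : ‖P - T s0‖ < δ := by rwa [← dist_eq_norm]
  have key : ‖T s0 - T s0 * P‖ ≤ δ * (1 + M) := by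
    have hdecomp : T s0 - T s0 * P = (T s0 - P) + (P - T s0) * P := by
      rw [sub_mul]
      nth_rewrite 2 [← hPP]
      abel
    rw [hdecomp]
    calc ‖(T s0 - P) + (P - T s0) * P‖ ≤ ‖T s0 - P‖ + ‖(P - T s0) * P‖ := norm_add_le _ _
      _ ≤ ‖T s0 - P‖ + ‖P - T s0‖ * ‖P‖ := by gcongr; exact norm_mul_le _ _
      _ ≤ δ + δ * M := by
          rw [norm_sub_rev]
          have h1 := hPs0.le
          nlinarith [norm_nonneg (P - T s0)]
      _ = δ * (1 + M) := by ring
  refine ⟨s0, ?_⟩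
  rintro s ⟨u, rfl⟩
  have h1 : T (s0 + u) = T u * T s0 := by rw [add_comm, hTmul]
  have h2 : T (s0 + u) - T (s0 + u) * P = T u * (T s0 - T s0 * P) := by
    rw [h1, mul_sub, mul_assoc]
  rw [h2]
  calc ‖T u * (T s0 - T s0 * P)‖ ≤ ‖T u‖ * ‖T s0 - T s0 * P‖ := norm_mul_le _ _
    _ ≤ M * (δ * (1 + M)) := mul_le_mul (hM u) key (norm_nonneg _) hM0
    _ ≤ δ * (M * (1 + M) + 1) := by nlinarith
    _ = ε := by rw [hδdef, div_mul_cancel₀ _ hden.ne']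

/-- Division in the semigroup at infinity. -/
lemma exists_div (hTmul : ∀ s t : S, T (s + t) = T s * T t) {M : ℝ} (hM : ∀ s : S, ‖T s‖ ≤ M)
    (hne : (sgAtInfty T).Nonempty) (hcp : IsCompact (sgAtInfty T))
    {A B : E →L[ℝ] E} (hA : A ∈ sgAtInfty T) (hB : B ∈ sgAtInfty T) :
    ∃ C ∈ sgAtInfty T, A * C = B := by
  have hM0 : 0 ≤ M := le_trans (norm_nonneg _) (hM 0)
  obtain ⟨P0, hP0mem, hP0idem⟩ := exists_idempotent hTmul hne hcp
  have happrox : ∀ ε : ℝ, 0 < ε → ∃ C ∈ sgAtInfty T, ‖A * C - B‖ ≤ ε := by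
    intro ε hε
    set δ := ε / (3 * (M + 1)) with hδdef
    have hden : (0:ℝ) < 3 * (M + 1) := by positivity
    have hδpos : 0 < δ := div_pos hε hden
    obtain ⟨s0, hs0⟩ := tail_small hTmul hM hP0mem hP0idem hδpos
    have hA0 := mem_sgAtInfty.mp hA 0
    rw [Metric.mem_closure_iff] at hA0
    obtain ⟨b, ⟨s, -, rfl⟩, hbs⟩ := hA0 δ hδpos
    have hBst := mem_sgAtInfty.mp hB (s + s0)
    rw [Metric.mem_closure_iff] at hBst
    obtain ⟨b, ⟨t, ht, rfl⟩, hbt⟩ := hBst δ hδpos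
    obtain ⟨v, rfl⟩ := ht
    set u := s0 + v with hudef
    refine ⟨T u * P0, smul_mem_sgAtInfty hTmul u hP0mem, ?_⟩
    have hTuC : ‖T u - T u * P0‖ ≤ δ := hs0 u ⟨v, rfl⟩
    have hCnorm : ‖T u * P0‖ ≤ M :=
      norm_le_of_mem hM (sgAtInfty_subset_closure_range
        (smul_mem_sgAtInfty hTmul u hP0mem))
    have htu : T (s + s0 + v) = T s * T u := by rw [add_assoc, hTmul]
    have hdecomp : A * (T u * P0) - B =
        (A - T s) * (T u * P0) + T s * (T u * P0 - T u) + (T (s + s0 + v) - B) := by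
      rw [htu]
      noncomm_ring
    rw [hdecomp]
    have e1 : ‖(A - T s) * (T u * P0)‖ ≤ δ * M := by
      calc ‖(A - T s) * (T u * P0)‖ ≤ ‖A - T s‖ * ‖T u * P0‖ := norm_mul_le _ _
        _ ≤ δ * M := by
            have : ‖A - T s‖ < δ := by rwa [← dist_eq_norm]
            nlinarith [norm_nonneg (A - T s), norm_nonneg (T u * P0)]
    have e2 : ‖T s * (T u * P0 - T u)‖ ≤ M * δ := by
      calc ‖T s * (T u * P0 - T u)‖ ≤ ‖T s‖ * ‖T u * P0 - T u‖ := norm_mul_le _ _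
        _ ≤ M * δ := by
            rw [norm_sub_rev]
            have := hM s
            nlinarith [norm_nonneg (T s), norm_nonneg (T u - T u * P0)]
    have e3 : ‖T (s + s0 + v) - B‖ ≤ δ := by
      rw [norm_sub_rev, ← dist_eq_norm]; exact hbt.le
    calc ‖(A - T s) * (T u * P0) + T s * (T u * P0 - T u) + (T (s + s0 + v) - B)‖
        ≤ ‖(A - T s) * (T u * P0) + T s * (T u * P0 - T u)‖ + ‖T (s + s0 + v) - B‖ :=
          norm_add_le _ _
      _ ≤ (‖(A - T s) * (T u * P0)‖ + ‖T s * (T u * P0 - T u)‖) + ‖T (s + s0 + v) - B‖ := by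
          gcongr; exact norm_add_le _ _
      _ ≤ δ * M + M * δ + δ := by linarith
      _ ≤ δ * (3 * (M + 1)) := by nlinarith
      _ = ε := by rw [hδdef, div_mul_cancel₀ _ hden.ne']
  set F : ℕ → Set (E →L[ℝ] E) :=
    fun n => {C | C ∈ sgAtInfty T ∧ ‖A * C - B‖ ≤ 1 / (n + 1)} with hF
  have hFcl : ∀ n, IsClosed (F n) := by
    intro n
    exact isClosed_sgAtInfty.inter (isClosed_le
      (((continuous_const.mul continuous_id).sub continuous_const).norm) continuous_const)
  have hFne : ∀ n, (F n).Nonempty := by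
    intro n
    obtain ⟨C, hC, hC2⟩ := happrox (1 / (n + 1)) (by positivity)
    exact ⟨C, hC, hC2⟩
  have hFcp : ∀ n, IsCompact (F n) :=
    fun n => hcp.of_isClosed_subset (hFcl n) (fun C hC => hC.1)
  have hFmono : ∀ {m n : ℕ}, m ≤ n → F n ⊆ F m := by
    intro m n hmn C hC
    refine ⟨hC.1, hC.2.trans ?_⟩
    refine one_div_le_one_div_of_le (by positivity) ?_
    have : (m:ℝ) ≤ n := Nat.cast_le.mpr hmn
    linarith
  have hFdir : Directed (· ⊇ ·) F := fun m n =>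
    ⟨max m n, hFmono (le_max_left m n), hFmono (le_max_right m n)⟩
  obtain ⟨C, hC⟩ := IsCompact.nonempty_iInter_of_directed_nonempty_isCompact_isClosed
    F hFdir hFne hFcp hFcl
  have hCmem : C ∈ sgAtInfty T := (Set.mem_iInter.mp hC 0).1
  have hzero : ‖A * C - B‖ ≤ 0 := by
    by_contra hpos
    push_neg at hpos
    obtain ⟨n, hn⟩ := exists_nat_one_div_lt hpos
    have := (Set.mem_iInter.mp hC n).2
    have hcast : (1:ℝ) / (n + 1) = 1 / ((n:ℝ) + 1) := by norm_num
    linarith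
  exact ⟨C, hCmem, sub_eq_zero.mp (norm_eq_zero.mp (le_antisymm hzero (norm_nonneg _)))⟩

end Aux

/-- Let `(T_s)_{s∈S}` be a bounded representation of a commutative monoid on a
Banach space whose semigroup at infinity is non-empty and compact, and let `R ⊆ S` be a cofinal
submonoid. Then the semigroup at infinity of the restricted representation `(T_r)_{r∈R}` (with
the pre-order induced by the addition of `R`) is also non-empty and compact, and the two
projections at infinity coincide. -/
theorem statement4 {E : Type*} [NormedAddCommGroup E] [NormedSpace ℝ E] [CompleteSpace E]
    {S : Type*} [AddCommMonoid S] (T : S → E →L[ℝ] E)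
    (hT0 : T 0 = 1) (hTmul : ∀ s t : S, T (s + t) = T s * T t)
    (hbdd : ∃ M : ℝ, ∀ s : S, ‖T s‖ ≤ M)
    (R : AddSubmonoid S) (hcof : ∀ s : S, ∃ r ∈ R, sgLE s r)
    (hne : (sgAtInfty T).Nonempty) (hcp : IsCompact (sgAtInfty T)) :
    (sgAtInfty (fun r : R => T r)).Nonempty ∧
    IsCompact (sgAtInfty (fun r : R => T r)) ∧
    ∀ P Q : E →L[ℝ] E, IsNeutralAtInfty T P →
      IsNeutralAtInfty (fun r : R => T r) Q → P = Q := by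
  obtain ⟨M, hM⟩ := hbdd
  obtain ⟨P0, hP0mem, hP0idem⟩ := exists_idempotent hTmul hne hcp
  have hsubset : sgAtInfty (fun r : R => T ↑r) ⊆ sgAtInfty T := by
    intro A hA
    rw [mem_sgAtInfty] at hA ⊢
    intro q
    obtain ⟨r, hrR, hqr⟩ := hcof q
    refine closure_mono ?_ (hA ⟨r, hrR⟩)
    rintro - ⟨s, hs, rfl⟩
    refine ⟨(s : S), ?_, rfl⟩
    obtain ⟨u, hu⟩ := hs
    refine sgLE_trans hqr ⟨(u : S), ?_⟩
    rw [hu]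
    rfl
  have hcpR : IsCompact (sgAtInfty (fun r : R => T ↑r)) :=
    hcp.of_isClosed_subset isClosed_sgAtInfty hsubset
  have hRne : Nonempty R := ⟨0⟩
  set g : R → (E →L[ℝ] E) := fun r => T ↑r * P0 with hg
  have hgmem : ∀ r : R, g r ∈ sgAtInfty T := fun r => smul_mem_sgAtInfty hTmul ↑r hP0mem
  set Acl : R → Set (E →L[ℝ] E) := fun r => closure (g '' {s | sgLE r s}) with hAcl
  have hAsub : ∀ r, Acl r ⊆ sgAtInfty T := fun r =>
    closure_minimal (by rintro - ⟨s, -, rfl⟩; exact hgmem s) isClosed_sgAtInfty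
  have hAne : ∀ r, (Acl r).Nonempty := fun r =>
    ⟨g r, subset_closure ⟨r, sgLE_refl r, rfl⟩⟩
  have hAcp : ∀ r, IsCompact (Acl r) := fun r =>
    hcp.of_isClosed_subset isClosed_closure (hAsub r)
  have hAdir : Directed (· ⊇ ·) Acl := by
    intro r1 r2
    refine ⟨r1 + r2, ?_, ?_⟩
    · exact closure_mono (Set.image_mono (fun s hs => sgLE_trans ⟨r2, rfl⟩ hs))
    · exact closure_mono (Set.image_mono (fun s hs => sgLE_trans ⟨r1, add_comm r1 r2⟩ hs))
  obtain ⟨Q0, hQ0⟩ := IsCompact.nonempty_iInter_of_directed_nonempty_isCompact_isClosed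
    Acl hAdir hAne hAcp (fun r => isClosed_closure)
  have hQ0mem : Q0 ∈ sgAtInfty (fun r : R => T ↑r) := by
    rw [mem_sgAtInfty]
    intro r
    rw [Metric.mem_closure_iff]
    intro ε hε
    obtain ⟨s0, hs0⟩ := tail_small hTmul hM hP0mem hP0idem (half_pos hε)
    obtain ⟨r1, hr1R, hr1⟩ := hcof s0
    have h2 := Set.mem_iInter.mp hQ0 (r + ⟨r1, hr1R⟩)
    rw [Metric.mem_closure_iff] at h2
    obtain ⟨b, ⟨s, hs, rfl⟩, hb⟩ := h2 (ε / 2) (half_pos hε)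
    obtain ⟨u, hu⟩ := hs
    refine ⟨T ↑s, ⟨s, ⟨⟨r1, hr1R⟩ + u, by rw [hu, add_assoc]⟩, rfl⟩, ?_⟩
    have hles : sgLE s0 (↑s : S) := by
      refine sgLE_trans hr1 ⟨↑r + ↑u, ?_⟩
      rw [hu]
      push_cast
      abel
    have h3 : ‖T ↑s - T ↑s * P0‖ ≤ ε / 2 := hs0 ↑s hles
    calc dist Q0 (T ↑s) ≤ dist Q0 (g s) + dist (g s) (T ↑s) := dist_triangle _ _ _
      _ < ε / 2 + ε / 2 := by
          refine add_lt_add_of_lt_of_le hb ?_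
          show dist (T ↑s * P0) (T ↑s) ≤ ε / 2
          rw [dist_eq_norm, norm_sub_rev]
          exact h3
      _ = ε := add_halves ε
  refine ⟨⟨Q0, hQ0mem⟩, hcpR, ?_⟩
  intro P Q hP hQ
  have hQmem : Q ∈ sgAtInfty T := hsubset hQ.1
  have hQQ : Q * Q = Q := (hQ.2 Q hQ.1).1
  have hQP : Q * P = Q := (hP.2 Q hQmem).2
  obtain ⟨C, hC, hQC⟩ := exists_div hTmul hM hne hcp hQmem hP.1
  calc P = Q * C := hQC.symm
    _ = Q * Q * C := by rw [hQQ]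
    _ = Q * (Q * C) := mul_assoc _ _ _
    _ = Q * P := by rw [hQC]
    _ = Q := hQP
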